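/- arXiv:2108.09088 — 2 statements merged into one kernel-verified Lean document; each statement's English description precedes it below -/
import Mathlib

section
/- Let K = mN − N + 2 and let M(P2) be the 3×3 real matrix with rows (−(m−1)/(Kα), (m−1)²/(2Kα), 0), (1 − N/(Kα), −(2βK + N(m−1) + 4)/(2Kα), −1), (0, 0, (σ(m−1)+2(p−1))/(2Kα)). Then λ3 := (σ(m−1)+2(p−1))/(2Kα) is a positive eigenvalue of M(P2), and every complex eigenvalue z of M(P2) with z ≠ λ3 satisfies Re z < 0. (Indeed the upper-left 2×2 block has trace −((N+2)(m−1) + 2Kβ + 4)/(2Kα) < 0 and determinant (m−1)/(2Kα²) > 0.) -/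
open Real Filter Set Topology

noncomputable def alphaC (m p σ : ℝ) : ℝ := (σ + 2) / (σ * (m - 1) + 2 * (p - 1))

noncomputable def betaC (m p σ : ℝ) : ℝ := (m - p) / (σ * (m - 1) + 2 * (p - 1))

/-!
The matrix is block upper triangular, so its characteristic polynomial factors as
`(X - λ₃) * χ`, where `χ = X² - T X + D` is the characteristic polynomial of the upper-left
`2 × 2` block. A real quadratic with `T < 0 < D` has both roots in the open left half-plane,
and the identity `α (m - 1) = 1 + 2 β` reduces `D` to `(m - 1) / (2 K α²)`.
-/

namespace Matrix

theorem eval_charpoly_fin_three_of_blockTriangular {R : Type*} [CommRing R]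
    (a b c d e l t : R) :
    (!![a, b, 0; c, d, e; 0, 0, l]).charpoly.eval t = (t - l) * ((t - a) * (t - d) - b * c) := by
  rw [eval_charpoly, det_fin_three]
  simp only [scalar_apply, sub_apply, diagonal_apply_eq, of_apply, cons_val', cons_val_zero,
    cons_val_fin_one, cons_val_one, cons_val, ne_eq, Fin.reduceEq, not_false_eq_true,
    diagonal_apply_ne]
  ring

end Matrix

theorem Complex.re_neg_of_sq_sub_mul_add_eq_zero {T D : ℝ} (hT : T < 0) (hD : 0 < D) {z : ℂ}
    (hz : z ^ 2 - T * z + D = 0) : z.re < 0 := by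
  have hre : z.re ^ 2 - z.im ^ 2 - T * z.re + D = 0 := by
    simpa [sq] using congrArg Complex.re hz
  have him : z.im * (2 * z.re - T) = 0 := by
    have := congrArg Complex.im hz
    simp only [sq, Complex.sub_im, Complex.add_im, Complex.mul_im, Complex.ofReal_re,
      Complex.ofReal_im, Complex.zero_im] at this
    linarith
  rcases mul_eq_zero.mp him with hreal | hmid
  · -- a real root of `x² - T x + D` is negative, since the polynomial is positive on `[0, ∞)`
    rw [hreal] at hre
    by_contra! hnonneg
    nlinarith
  · linarith

theorem isRoot_charpoly_map_ofReal_fin_three_of_blockTriangular {a b c d e l : ℝ} {z : ℂ} :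
    (Matrix.map !![a, b, 0; c, d, e; 0, 0, l] Complex.ofReal).charpoly.IsRoot z ↔
      (z - l) * ((z - a) * (z - d) - b * c) = 0 := by
  have hmap : Matrix.map !![a, b, 0; c, d, e; 0, 0, l] Complex.ofReal =
      !![(a : ℂ), b, 0; c, d, e; 0, 0, l] := by
    ext i j
    fin_cases i <;> fin_cases j <;> simp
  rw [Polynomial.IsRoot, hmap, Matrix.eval_charpoly_fin_three_of_blockTriangular]

theorem re_neg_of_isRoot_charpoly_fin_three_of_blockTriangular {a b c d e l : ℝ}
    (htrace : a + d < 0) (hdet : 0 < a * d - b * c) {z : ℂ}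
    (hz : (Matrix.map !![a, b, 0; c, d, e; 0, 0, l] Complex.ofReal).charpoly.IsRoot z)
    (hzl : z ≠ l) : z.re < 0 := by
  rw [isRoot_charpoly_map_ofReal_fin_three_of_blockTriangular] at hz
  refine Complex.re_neg_of_sq_sub_mul_add_eq_zero htrace hdet ?_
  have hquad := (mul_eq_zero.mp hz).resolve_left (sub_ne_zero.mpr hzl)
  push_cast
  linear_combination hquad

section Parameters

variable {m p σ : ℝ}

theorem exponent_pos (hm : 1 < m) (hσ : 2 * (1 - p) / (m - 1) < σ) :
    0 < σ * (m - 1) + 2 * (p - 1) := by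
  have := (div_lt_iff₀ (sub_pos.mpr hm)).mp hσ
  linarith

theorem alphaC_pos (hm : 1 < m) (hp1 : p < 1) (hσ : 2 * (1 - p) / (m - 1) < σ) :
    0 < alphaC m p σ := by
  have hσ0 : 0 < σ := lt_trans (div_pos (by linarith) (by linarith)) hσ
  exact div_pos (by linarith) (exponent_pos hm hσ)

theorem betaC_pos (hm : 1 < m) (hp1 : p < 1) (hσ : 2 * (1 - p) / (m - 1) < σ) :
    0 < betaC m p σ :=
  div_pos (by linarith) (exponent_pos hm hσ)

theorem alphaC_mul_sub_one (hL : σ * (m - 1) + 2 * (p - 1) ≠ 0) :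
    alphaC m p σ * (m - 1) = 1 + 2 * betaC m p σ := by
  rw [alphaC, betaC]
  field_simp
  ring

end Parameters

theorem det_upperLeft_block_P2 {m N K α β : ℝ} (hK : K = m * N - N + 2) (hK0 : K ≠ 0)
    (hα : α ≠ 0) (hαβ : α * (m - 1) = 1 + 2 * β) :
    -(m - 1) / (K * α) * (-(2 * β * K + N * (m - 1) + 4) / (2 * K * α)) -
        (m - 1) ^ 2 / (2 * K * α) * (1 - N / (K * α)) = (m - 1) / (2 * K * α ^ 2) := by
  have hβ : β = (α * (m - 1) - 1) / 2 := by linarith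
  subst hβ
  field_simp
  rw [hK]
  ring

theorem eigenvalues_at_P2_general (m p σ : ℝ) (N : ℕ) (hm : 1 < m) (hp1 : p < 1)
    (hσ : 2 * (1 - p) / (m - 1) < σ)
    (K : ℝ) (hK : K = m * (N : ℝ) - (N : ℝ) + 2)
    (M : Matrix (Fin 3) (Fin 3) ℝ)
    (hM : M = !![-(m - 1) / (K * alphaC m p σ), (m - 1) ^ 2 / (2 * K * alphaC m p σ), 0;
        1 - (N : ℝ) / (K * alphaC m p σ),
          -(2 * betaC m p σ * K + (N : ℝ) * (m - 1) + 4) / (2 * K * alphaC m p σ), -1;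
        0, 0, (σ * (m - 1) + 2 * (p - 1)) / (2 * K * alphaC m p σ)])
    (l3 : ℝ) (hl3 : l3 = (σ * (m - 1) + 2 * (p - 1)) / (2 * K * alphaC m p σ)) :
    0 < l3 ∧
    (M.map Complex.ofReal).charpoly.IsRoot (l3 : ℂ) ∧
    (∀ z : ℂ, (M.map Complex.ofReal).charpoly.IsRoot z → z ≠ (l3 : ℂ) → z.re < 0) ∧
    -(((N : ℝ) + 2) * (m - 1) + 2 * K * betaC m p σ + 4) / (2 * K * alphaC m p σ) < 0 ∧
    0 < (m - 1) / (2 * K * alphaC m p σ ^ 2) := by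
  have hm1 : 0 < m - 1 := sub_pos.mpr hm
  have hL := exponent_pos hm hσ
  have hα := alphaC_pos hm hp1 hσ
  have hβ := betaC_pos hm hp1 hσ
  have hKpos : 0 < K := by rw [hK]; nlinarith [N.cast_nonneg (α := ℝ)]
  have htrace : -(m - 1) / (K * alphaC m p σ) +
      -(2 * betaC m p σ * K + (N : ℝ) * (m - 1) + 4) / (2 * K * alphaC m p σ) =
      -(((N : ℝ) + 2) * (m - 1) + 2 * K * betaC m p σ + 4) / (2 * K * alphaC m p σ) := by
    field_simp
    ring
  have htrace_neg :
      -(((N : ℝ) + 2) * (m - 1) + 2 * K * betaC m p σ + 4) / (2 * K * alphaC m p σ) < 0 :=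
    div_neg_of_neg_of_pos (by nlinarith [N.cast_nonneg (α := ℝ)]) (by positivity)
  have hdet_pos : 0 < (m - 1) / (2 * K * alphaC m p σ ^ 2) := by positivity
  have hdet := det_upperLeft_block_P2 hK hKpos.ne' hα.ne' (alphaC_mul_sub_one hL.ne')
  rw [hM, ← hl3]
  refine ⟨hl3 ▸ by positivity, ?_, fun z hz hzl => ?_, htrace_neg, hdet_pos⟩
  · exact isRoot_charpoly_map_ofReal_fin_three_of_blockTriangular.mpr (by simp)
  · exact re_neg_of_isRoot_charpoly_fin_three_of_blockTriangular (htrace ▸ htrace_neg)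
      (hdet ▸ hdet_pos) hz hzl

theorem eigenvalues_at_P2 (m p σ : ℝ) (N : ℕ) (hm : 1 < m) (hp0 : 0 < p) (hp1 : p < 1)
    (hσ : 2 * (1 - p) / (m - 1) < σ) (hN : 1 ≤ N)
    (K : ℝ) (hK : K = m * (N : ℝ) - (N : ℝ) + 2)
    (M : Matrix (Fin 3) (Fin 3) ℝ)
    (hM : M = !![-(m - 1) / (K * alphaC m p σ), (m - 1) ^ 2 / (2 * K * alphaC m p σ), 0;
        1 - (N : ℝ) / (K * alphaC m p σ),
          -(2 * betaC m p σ * K + (N : ℝ) * (m - 1) + 4) / (2 * K * alphaC m p σ), -1;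
        0, 0, (σ * (m - 1) + 2 * (p - 1)) / (2 * K * alphaC m p σ)])
    (l3 : ℝ) (hl3 : l3 = (σ * (m - 1) + 2 * (p - 1)) / (2 * K * alphaC m p σ)) :
    0 < l3 ∧
    (M.map Complex.ofReal).charpoly.IsRoot (l3 : ℂ) ∧
    (∀ z : ℂ, (M.map Complex.ofReal).charpoly.IsRoot z → z ≠ (l3 : ℂ) → z.re < 0) ∧
    -(((N : ℝ) + 2) * (m - 1) + 2 * K * betaC m p σ + 4) / (2 * K * alphaC m p σ) < 0 ∧
    0 < (m - 1) / (2 * K * alphaC m p σ ^ 2) :=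
  eigenvalues_at_P2_general m p σ N hm hp1 hσ K hK M hM l3 hl3
end

section
/- Assume m + p = 2 (so m ∈ (1,2) and σ > 2). Then for every Y ∈ [−β/(2α), 0], the quantity h(Y) = (σ + 2N − 2)Y² + ((σ − 2 + N)(β/α) − 2)Y − β/α is strictly negative. Consequently, for every X > 0 and Y ∈ [−β/(2α), 0], the inner product G(X,Y) = X·h(Y) of the vector field of (PSsyst1) restricted to the parabolic cylinder {Z = −Y² − (β/α)Y} with the outward normal (0, −2Y − β/α, −1) is strictly negative, so this cylinder cannot be crossed from right to left (in Y) on this range. -/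
/-!
With `m + p = 2` the ratio `β/α` equals `r = 2(m - 1)/(σ + 2) > 0`, and `h` is a convex quadratic
in `Y` (its leading coefficient `σ + 2N - 2` is positive since `σ > 2`). Hence on `[-r/2, 0]` it is
bounded by its endpoint values `h(0) = -r` and `h(-r/2) = r²(2 - σ)/4`, both negative.
-/

open Real Filter Set Topology

theorem quadratic_neg_of_mem_Icc {a b c x y z : ℝ} (ha : 0 ≤ a)
    (hx : a * x ^ 2 + b * x + c < 0) (hy : a * y ^ 2 + b * y + c < 0) (hz : z ∈ Icc x y) :
    a * z ^ 2 + b * z + c < 0 := by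
  have hconv : ConvexOn ℝ univ fun t : ℝ => a * t ^ 2 + b * t + c :=
    (((even_two.convexOn_pow.smul ha).add
      ((LinearMap.mul ℝ ℝ b).convexOn convex_univ)).add_const c :)
  exact (hconv.le_max_of_mem_Icc (mem_univ x) (mem_univ y) hz).trans_lt (max_lt hx hy)

/-- The function `h` of the statement, with `r` standing for `β/α`. -/
def cylinderFlux (σ N r Y : ℝ) : ℝ :=
  (σ + 2 * N - 2) * Y ^ 2 + ((σ - 2 + N) * r - 2) * Y - r

section cylinderFlux

variable {σ N r : ℝ}

theorem cylinderFlux_zero : cylinderFlux σ N r 0 = -r := by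
  simp [cylinderFlux]

theorem cylinderFlux_neg_half : cylinderFlux σ N r (-(r / 2)) = r ^ 2 * (2 - σ) / 4 := by
  unfold cylinderFlux
  ring

theorem cylinderFlux_neg (hσ : 2 < σ) (hN : 0 ≤ N) (hr : 0 < r) {Y : ℝ}
    (hY : Y ∈ Icc (-(r / 2)) 0) : cylinderFlux σ N r Y < 0 := by
  have hleft : cylinderFlux σ N r (-(r / 2)) < 0 := by
    rw [cylinderFlux_neg_half]
    exact div_neg_of_neg_of_pos (mul_neg_of_pos_of_neg (by positivity) (by linarith)) four_pos
  have hright : cylinderFlux σ N r 0 < 0 := by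
    rw [cylinderFlux_zero]
    exact neg_neg_of_pos hr
  simp only [cylinderFlux, sub_eq_add_neg (_ * _ + _)] at hleft hright ⊢
  exact quadratic_neg_of_mem_Icc (by linarith) hleft hright hY

end cylinderFlux

theorem betaC_div_alphaC {m p σ : ℝ} (hL : σ * (m - 1) + 2 * (p - 1) ≠ 0) :
    betaC m p σ / alphaC m p σ = (m - p) / (σ + 2) :=
  div_div_div_cancel_right₀ hL _ _

theorem parabolic_cylinder_flow_negative_general (m p σ : ℝ) (N : ℕ) (hm : 1 < m)
    (hσ : 2 * (1 - p) / (m - 1) < σ)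
    (hmp : m + p = 2) :
    (∀ Y : ℝ, -(betaC m p σ) / (2 * alphaC m p σ) ≤ Y → Y ≤ 0 →
      (σ + 2 * (N : ℝ) - 2) * Y ^ 2
        + ((σ - 2 + (N : ℝ)) * (betaC m p σ / alphaC m p σ) - 2) * Y
        - betaC m p σ / alphaC m p σ < 0) ∧
    (∀ X Y : ℝ, 0 < X → -(betaC m p σ) / (2 * alphaC m p σ) ≤ Y → Y ≤ 0 →
      X * ((σ + 2 * (N : ℝ) - 2) * Y ^ 2
        + ((σ - 2 + (N : ℝ)) * (betaC m p σ / alphaC m p σ) - 2) * Y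
        - betaC m p σ / alphaC m p σ) < 0) := by
  obtain rfl : p = 2 - m := by linarith
  have hσ2 : 2 < σ := by
    rwa [show 2 * (1 - (2 - m)) / (m - 1) = 2 by rw [div_eq_iff (sub_pos.2 hm).ne']; ring] at hσ
  have hL : 0 < σ * (m - 1) + 2 * (2 - m - 1) := by nlinarith
  set α := alphaC m (2 - m) σ
  set β := betaC m (2 - m) σ
  have hr : 0 < β / α := by
    rw [betaC_div_alphaC hL.ne']
    exact div_pos (by linarith) (by linarith)
  have hlow : -β / (2 * α) = -(β / α / 2) := by ring
  have hflux (Y : ℝ) (hYlow : -β / (2 * α) ≤ Y) (hY : Y ≤ 0) : cylinderFlux σ N (β / α) Y < 0 :=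
    cylinderFlux_neg hσ2 N.cast_nonneg hr ⟨hlow ▸ hYlow, hY⟩
  exact ⟨hflux, fun X Y hX hYlow hY => mul_neg_of_pos_of_neg hX (hflux Y hYlow hY)⟩

theorem parabolic_cylinder_flow_negative (m p σ : ℝ) (N : ℕ) (hm : 1 < m) (hp0 : 0 < p) (hp1 : p < 1)
    (hσ : 2 * (1 - p) / (m - 1) < σ) (hN : 1 ≤ N)
    (hmp : m + p = 2) :
    (∀ Y : ℝ, -(betaC m p σ) / (2 * alphaC m p σ) ≤ Y → Y ≤ 0 →
      (σ + 2 * (N : ℝ) - 2) * Y ^ 2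
        + ((σ - 2 + (N : ℝ)) * (betaC m p σ / alphaC m p σ) - 2) * Y
        - betaC m p σ / alphaC m p σ < 0) ∧
    (∀ X Y : ℝ, 0 < X → -(betaC m p σ) / (2 * alphaC m p σ) ≤ Y → Y ≤ 0 →
      X * ((σ + 2 * (N : ℝ) - 2) * Y ^ 2
        + ((σ - 2 + (N : ℝ)) * (betaC m p σ / alphaC m p σ) - 2) * Y
        - betaC m p σ / alphaC m p σ) < 0) :=
  parabolic_cylinder_flow_negative_general m p σ N hm hσ hmp
end
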